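/- arXiv:0807.0505 — 5 statements merged into one kernel-verified Lean document; each statement's English description precedes it below -/
import Mathlib

section
/- The density function x ↦ √(4λ − (x − 1 − λ)²)/(2πλx) on the interval [(1−√λ)², (1+√λ)²] integrates to 1, for any λ ∈ (0,1]. -/
/-!
Writing `s = √λ`, the density is `(2πλ)⁻¹ √((x - p²)(q² - x)) / x` with
`p = 1 - s ≥ 0` and `q = 1 + s`. For `R = √((x - p²)(q² - x))`, the functions `R`,
`arcsin ((2x - p² - q²) / (q² - p²))` and `arcsin (((p² + q²)x - 2p²q²) / ((q² - p²)x))`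
have derivatives `(p² + q² - 2x) / (2R)`, `1 / R` and `pq / (xR)`, so
`R + (p² + q²)/2 · arcsin(…) - pq · arcsin(…)` is a primitive of `R / x`. Both arcsines
run from `-1` to `1` over `[p², q²]` (the second one matters only for `p > 0`), so
`∫ R / x = π (p² + q²)/2 - π pq = π/2 · (q - p)² = 2πλ`.
-/

open Real MeasureTheory

lemma hasDerivAt_arcsin_comp_of_sq_eq {f : ℝ → ℝ} {f' S x : ℝ} (hf : HasDerivAt f f' x)
    (hS : 0 < S) (hsq : 1 - f x ^ 2 = S ^ 2) :
    HasDerivAt (fun y => arcsin (f y)) (f' / S) x := by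
  have hlt : f x ^ 2 < 1 := by nlinarith
  have hne₁ : f x ≠ 1 := by rintro h; simp [h] at hlt
  have hne₂ : f x ≠ -1 := by rintro h; simp [h] at hlt
  refine ((Real.hasDerivAt_arcsin hne₂ hne₁).comp x hf).congr_deriv ?_
  rw [hsq, Real.sqrt_sq hS.le]
  field_simp

section Primitive

variable {p q x : ℝ}

noncomputable def marchenkoPasturPrimitive (p q x : ℝ) : ℝ :=
  √((x - p ^ 2) * (q ^ 2 - x))
    + (p ^ 2 + q ^ 2) / 2 * arcsin ((2 * x - p ^ 2 - q ^ 2) / (q ^ 2 - p ^ 2))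
    - p * q * arcsin (((p ^ 2 + q ^ 2) * x - 2 * p ^ 2 * q ^ 2) / ((q ^ 2 - p ^ 2) * x))

lemma hasDerivAt_sqrt_mul_sub {a b : ℝ} (hax : a < x) (hxb : x < b) :
    HasDerivAt (fun y => √((y - a) * (b - y)))
      ((a + b - 2 * x) / (2 * √((x - a) * (b - x)))) x := by
  have hpos : 0 < (x - a) * (b - x) := mul_pos (by linarith) (by linarith)
  have hpoly : HasDerivAt (fun y => (y - a) * (b - y)) (a + b - 2 * x) x := by
    refine (((hasDerivAt_id' x).sub_const a).mul ((hasDerivAt_id' x).const_sub b)).congr_deriv ?_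
    ring
  exact hpoly.sqrt hpos.ne'

lemma hasDerivAt_arcsin_normalize {a b : ℝ} (hax : a < x) (hxb : x < b) :
    HasDerivAt (fun y => arcsin ((2 * y - a - b) / (b - a))) (1 / √((x - a) * (b - x))) x := by
  have hpos : 0 < (x - a) * (b - x) := mul_pos (by linarith) (by linarith)
  have hba : 0 < b - a := by linarith
  have hlin : HasDerivAt (fun y => (2 * y - a - b) / (b - a)) (2 / (b - a)) x := by
    refine ((((hasDerivAt_id' x).const_mul 2).sub_const a).sub_const b).div_const (b - a)
      |>.congr_deriv (by ring)
  have hS : 0 < 2 * √((x - a) * (b - x)) / (b - a) := by positivity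
  refine (hasDerivAt_arcsin_comp_of_sq_eq hlin hS ?_).congr_deriv ?_
  · rw [div_pow, div_pow, mul_pow, Real.sq_sqrt hpos.le]
    field_simp
    ring
  · field_simp

lemma hasDerivAt_arcsin_moebius (hp : 0 < p) (hq : 0 < q) (hpx : p ^ 2 < x) (hxq : x < q ^ 2) :
    HasDerivAt (fun y => arcsin (((p ^ 2 + q ^ 2) * y - 2 * p ^ 2 * q ^ 2) / ((q ^ 2 - p ^ 2) * y)))
      (p * q / (x * √((x - p ^ 2) * (q ^ 2 - x)))) x := by
  have hpos : 0 < (x - p ^ 2) * (q ^ 2 - x) := mul_pos (by linarith) (by linarith)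
  have hx : 0 < x := lt_of_le_of_lt (sq_nonneg p) hpx
  have hd : 0 < q ^ 2 - p ^ 2 := by linarith
  have hden : (q ^ 2 - p ^ 2) * x ≠ 0 := by positivity
  have hfrac : HasDerivAt
      (fun y => ((p ^ 2 + q ^ 2) * y - 2 * p ^ 2 * q ^ 2) / ((q ^ 2 - p ^ 2) * y))
      (2 * p ^ 2 * q ^ 2 / ((q ^ 2 - p ^ 2) * x ^ 2)) x := by
    refine ((((hasDerivAt_id' x).const_mul _).sub_const _).div ((hasDerivAt_id' x).const_mul _)
      hden).congr_deriv ?_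
    field_simp
    ring
  have hS : 0 < 2 * p * q * √((x - p ^ 2) * (q ^ 2 - x)) / ((q ^ 2 - p ^ 2) * x) := by positivity
  refine (hasDerivAt_arcsin_comp_of_sq_eq hfrac hS ?_).congr_deriv ?_
  · rw [div_pow, div_pow, mul_pow, mul_pow, mul_pow, Real.sq_sqrt hpos.le]
    field_simp
    ring
  · field_simp

lemma hasDerivAt_marchenkoPasturPrimitive (hp : 0 ≤ p) (hpq : p < q) (hpx : p ^ 2 < x)
    (hxq : x < q ^ 2) :
    HasDerivAt (marchenkoPasturPrimitive p q) (√((x - p ^ 2) * (q ^ 2 - x)) / x) x := by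
  have hpos : 0 < (x - p ^ 2) * (q ^ 2 - x) := mul_pos (by linarith) (by linarith)
  have hx : 0 < x := by nlinarith
  have hR : √((x - p ^ 2) * (q ^ 2 - x)) ^ 2 = (x - p ^ 2) * (q ^ 2 - x) := Real.sq_sqrt hpos.le
  have hmoebius : HasDerivAt
      (fun y => p * q * arcsin (((p ^ 2 + q ^ 2) * y - 2 * p ^ 2 * q ^ 2) / ((q ^ 2 - p ^ 2) * y)))
      (p * q * (p * q / (x * √((x - p ^ 2) * (q ^ 2 - x))))) x := by
    rcases hp.eq_or_lt with rfl | hp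
    · simpa using hasDerivAt_const x (0 : ℝ)
    · exact (hasDerivAt_arcsin_moebius hp (hp.trans hpq) hpx hxq).const_mul (p * q)
  refine (((hasDerivAt_sqrt_mul_sub hpx hxq).add
    ((hasDerivAt_arcsin_normalize hpx hxq).const_mul ((p ^ 2 + q ^ 2) / 2))).sub
    hmoebius).congr_deriv ?_
  field_simp
  linear_combination (-2) * hR

lemma continuousOn_marchenkoPasturPrimitive (hp : 0 ≤ p) (hpq : p < q) :
    ContinuousOn (marchenkoPasturPrimitive p q) (Set.Icc (p ^ 2) (q ^ 2)) := by
  refine ContinuousOn.sub (by fun_prop) ?_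
  rcases hp.eq_or_lt with rfl | hp
  · simpa using continuousOn_const
  · refine continuousOn_const.mul (continuous_arcsin.comp_continuousOn (ContinuousOn.div
      (by fun_prop) (by fun_prop) fun y hy => ?_))
    have hy : 0 < y := (pow_pos hp 2).trans_le hy.1
    have hd : 0 < q ^ 2 - p ^ 2 := by nlinarith
    positivity

lemma marchenkoPasturPrimitive_sq_right (hp : 0 ≤ p) (hpq : p < q) :
    marchenkoPasturPrimitive p q (q ^ 2) = π / 4 * (p ^ 2 + q ^ 2) - π / 2 * (p * q) := by
  have hd : q ^ 2 - p ^ 2 ≠ 0 := by nlinarith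
  have hq : q ≠ 0 := (hp.trans_lt hpq).ne'
  have h1 : (2 * q ^ 2 - p ^ 2 - q ^ 2) / (q ^ 2 - p ^ 2) = 1 := by field_simp; ring
  have h2 : ((p ^ 2 + q ^ 2) * q ^ 2 - 2 * p ^ 2 * q ^ 2) / ((q ^ 2 - p ^ 2) * q ^ 2) = 1 := by
    field_simp; ring
  simp only [marchenkoPasturPrimitive, sub_self, mul_zero, Real.sqrt_zero, h1, h2, arcsin_one]
  ring

lemma marchenkoPasturPrimitive_sq_left (hp : 0 ≤ p) (hpq : p < q) :
    marchenkoPasturPrimitive p q (p ^ 2) = -(π / 4 * (p ^ 2 + q ^ 2)) + π / 2 * (p * q) := by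
  have hd : q ^ 2 - p ^ 2 ≠ 0 := by nlinarith
  have h1 : (2 * p ^ 2 - p ^ 2 - q ^ 2) / (q ^ 2 - p ^ 2) = -1 := by field_simp; ring
  have h2 : p * q * arcsin (((p ^ 2 + q ^ 2) * p ^ 2 - 2 * p ^ 2 * q ^ 2) /
      ((q ^ 2 - p ^ 2) * p ^ 2)) = -(π / 2 * (p * q)) := by
    rcases hp.eq_or_lt with rfl | hp
    · simp
    · rw [show ((p ^ 2 + q ^ 2) * p ^ 2 - 2 * p ^ 2 * q ^ 2) / ((q ^ 2 - p ^ 2) * p ^ 2) = -1 by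
        field_simp; ring, arcsin_neg_one]
      ring
  simp only [marchenkoPasturPrimitive, sub_self, zero_mul, Real.sqrt_zero, h1, h2, arcsin_neg_one]
  ring

theorem integral_sqrt_mul_sub_div_self (hp : 0 ≤ p) (hpq : p < q) :
    ∫ x in p ^ 2..q ^ 2, √((x - p ^ 2) * (q ^ 2 - x)) / x = π / 2 * (q - p) ^ 2 := by
  have hle : p ^ 2 ≤ q ^ 2 := by nlinarith
  have hderiv : ∀ x ∈ Set.Ioo (p ^ 2) (q ^ 2),
      HasDerivAt (marchenkoPasturPrimitive p q) (√((x - p ^ 2) * (q ^ 2 - x)) / x) x :=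
    fun x hx => hasDerivAt_marchenkoPasturPrimitive hp hpq hx.1 hx.2
  have hcont := continuousOn_marchenkoPasturPrimitive hp hpq
  have hint : IntervalIntegrable (fun x => √((x - p ^ 2) * (q ^ 2 - x)) / x) volume
      (p ^ 2) (q ^ 2) := by
    refine (intervalIntegrable_iff_integrableOn_Ioc_of_le hle).mpr
      (intervalIntegral.integrableOn_deriv_of_nonneg hcont hderiv fun x hx => ?_)
    exact div_nonneg (Real.sqrt_nonneg _) ((sq_nonneg p).trans hx.1.le)
  rw [intervalIntegral.integral_eq_sub_of_hasDerivAt_of_le hle hcont hderiv hint,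
    marchenkoPasturPrimitive_sq_right hp hpq, marchenkoPasturPrimitive_sq_left hp hpq]
  ring

end Primitive

theorem stmt_0 (lam : ℝ) (hlam : lam ∈ Set.Ioc (0:ℝ) 1) :
    ∫ x in Set.Icc ((1 - Real.sqrt lam)^2) ((1 + Real.sqrt lam)^2),
      Real.sqrt (4 * lam - (x - 1 - lam)^2) / (2 * Real.pi * lam * x) = 1 := by
  obtain ⟨hl0, hl1⟩ := hlam
  set s := √lam
  have hs : s ^ 2 = lam := Real.sq_sqrt hl0.le
  have hs0 : 0 < s := Real.sqrt_pos.mpr hl0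
  have hs1 : s ≤ 1 := Real.sqrt_le_one.mpr hl1
  have hdensity : ∀ x, √(4 * lam - (x - 1 - lam) ^ 2) / (2 * π * lam * x)
      = (2 * π * lam)⁻¹ * (√((x - (1 - s) ^ 2) * ((1 + s) ^ 2 - x)) / x) := fun x => by
    rw [show 4 * lam - (x - 1 - lam) ^ 2 = (x - (1 - s) ^ 2) * ((1 + s) ^ 2 - x) by
      rw [← hs]; ring]
    ring
  rw [integral_Icc_eq_integral_Ioc, ← intervalIntegral.integral_of_le (by nlinarith)]
  simp_rw [hdensity]
  rw [intervalIntegral.integral_const_mul,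
    integral_sqrt_mul_sub_div_self (by linarith) (by linarith), ← hs]
  field_simp
  ring
end

section
/- For λ ∈ (0,1], the measure μ_λ with density x ↦ √(4λ − (x − 1 − λ)²)/(2πλx) on [(1−√λ)², (1+√λ)²] has mean equal to 1. -/
open Real MeasureTheory

theorem stmt_1 (lam : ℝ) (hlam : lam ∈ Set.Ioc (0:ℝ) 1) :
    ∫ x in Set.Icc ((1 - Real.sqrt lam)^2) ((1 + Real.sqrt lam)^2),
      x * (Real.sqrt (4 * lam - (x - 1 - lam)^2) / (2 * Real.pi * lam * x)) = 1 := by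
  obtain ⟨hl0, hl1⟩ := hlam
  set s := Real.sqrt lam with hs
  have hs0 : 0 < s := Real.sqrt_pos.mpr hl0
  have hs2 : s ^ 2 = lam := Real.sq_sqrt hl0.le
  have hab : (1 - s)^2 ≤ (1 + s)^2 := by nlinarith
  -- pass to Ioc then interval integral
  rw [MeasureTheory.integral_Icc_eq_integral_Ioc,
    ← intervalIntegral.integral_of_le hab]
  have key : (∫ x in ((1-s)^2)..((1+s)^2),
      x * (Real.sqrt (4 * lam - (x - 1 - lam)^2) / (2 * Real.pi * lam * x)))
      = ∫ x in ((1-s)^2)..((1+s)^2),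
        Real.sqrt (4 * lam - (x - 1 - lam)^2) / (2 * Real.pi * lam) := by
    refine intervalIntegral.integral_congr (fun x _ => ?_)
    rcases eq_or_ne x 0 with h0 | h0
    · subst h0
      have : 4 * lam - (0 - 1 - lam)^2 ≤ 0 := by nlinarith
      rw [Real.sqrt_eq_zero_of_nonpos this]
      simp
    · field_simp
  rw [key]
  rw [intervalIntegral.integral_div]
  have hsub : (∫ x in ((1-s)^2)..((1+s)^2), Real.sqrt (4 * lam - (x - 1 - lam)^2))
      = ∫ u in (-(2*s))..(2*s), Real.sqrt (4 * lam - u^2) := by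
    have := intervalIntegral.integral_comp_sub_right
      (a := (1-s)^2) (b := (1+s)^2) (fun u => Real.sqrt (4 * lam - u^2)) (1 + lam)
    have e1 : (1-s)^2 - (1+lam) = -(2*s) := by nlinarith
    have e2 : (1+s)^2 - (1+lam) = 2*s := by nlinarith
    rw [e1, e2] at this
    rw [← this]
    congr 1
    ext x
    ring_nf
  have hscale : (∫ u in (-(2*s))..(2*s), Real.sqrt (4 * lam - u^2))
      = 2 * Real.pi * lam := by
    have h2s : (2*s) ≠ 0 := by positivity
    have := intervalIntegral.integral_comp_mul_left
      (fun u => Real.sqrt (4 * lam - u^2)) h2s (a := -1) (b := 1)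
    rw [mul_neg_one (2*s), mul_one] at this
    have hlhs : (∫ x in (-1:ℝ)..1, Real.sqrt (4 * lam - (2*s*x)^2))
        = (2*s) * ∫ x in (-1:ℝ)..1, Real.sqrt (1 - x^2) := by
      rw [← intervalIntegral.integral_const_mul]
      congr 1
      ext x
      have : 4 * lam - (2*s*x)^2 = (2*s)^2 * (1 - x^2) := by nlinarith
      rw [this, Real.sqrt_mul (by positivity), Real.sqrt_sq (by positivity)]
    rw [hlhs, integral_sqrt_one_sub_sq] at this
    have := this.symm
    rw [smul_eq_mul] at this
    field_simp at this
    nlinarith [Real.pi_pos]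
  rw [hsub, hscale]
  field_simp
end

section
/- For λ ∈ (0,1], the second moment of μ_λ equals 1 + λ. -/
open Real MeasureTheory

/-!
After cancelling one factor `x`, the integrand is `x √((2√λ)² - (x - (1 + λ))²) / (2πλ)`: `x` times
a semicircle of radius `2√λ` centred at `1 + λ`. Translating to the centre, the odd part integrates
to zero, so the integral is the centre `1 + λ` times the semicircle's area `π (2√λ)² / 2 = 2πλ`,
divided by `2πλ`.
-/

theorem intervalIntegral.integral_eq_zero_of_odd {E : Type*} [NormedAddCommGroup E]
    [NormedSpace ℝ E] {f : ℝ → E} (hf : ∀ x, f (-x) = -f x) (a : ℝ) :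
    ∫ x in -a..a, f x = 0 := by
  have h := intervalIntegral.integral_comp_neg (a := -a) (b := a) f
  simp only [hf, intervalIntegral.integral_neg, neg_neg] at h
  have htwice : (2 : ℝ) • ∫ x in -a..a, f x = 0 := by
    rw [two_smul]
    exact eq_neg_iff_add_eq_zero.mp h.symm
  exact (smul_eq_zero.mp htwice).resolve_left two_ne_zero

theorem integral_sqrt_sq_sub_sq {r : ℝ} (hr : 0 ≤ r) :
    ∫ u in -r..r, √(r ^ 2 - u ^ 2) = π * r ^ 2 / 2 := by
  have hscale : ∀ t : ℝ, √(r ^ 2 - (r * t) ^ 2) = r * √(1 - t ^ 2) := fun t => by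
    rw [show r ^ 2 - (r * t) ^ 2 = r ^ 2 * (1 - t ^ 2) by ring,
      sqrt_mul (sq_nonneg r), sqrt_sq hr]
  have h := intervalIntegral.smul_integral_comp_mul_left (a := -1) (b := 1)
    (fun u => √(r ^ 2 - u ^ 2)) r
  simp only [hscale, intervalIntegral.integral_const_mul, integral_sqrt_one_sub_sq,
    smul_eq_mul, mul_neg, mul_one] at h
  rw [← h]
  ring

theorem integral_mul_sqrt_sq_sub_sq_sub (c : ℝ) {r : ℝ} (hr : 0 ≤ r) :
    ∫ x in c - r..c + r, x * √(r ^ 2 - (x - c) ^ 2) = c * (π * r ^ 2 / 2) := by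
  have hcont : Continuous fun u : ℝ => √(r ^ 2 - u ^ 2) := by fun_prop
  have hodd : ∫ u in -r..r, u * √(r ^ 2 - u ^ 2) = 0 :=
    intervalIntegral.integral_eq_zero_of_odd (fun u => by simp [neg_mul]) r
  rw [sub_eq_neg_add, add_comm c r, ← intervalIntegral.integral_comp_add_right]
  simp only [add_sub_cancel_right, add_mul]
  rw [intervalIntegral.integral_add (Continuous.intervalIntegrable (by fun_prop) _ _)
      (Continuous.intervalIntegrable (by fun_prop) _ _),
    intervalIntegral.integral_const_mul, hodd, integral_sqrt_sq_sub_sq hr, zero_add]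

theorem stmt_2 (lam : ℝ) (hlam : lam ∈ Set.Ioc (0:ℝ) 1) :
    ∫ x in Set.Icc ((1 - Real.sqrt lam)^2) ((1 + Real.sqrt lam)^2),
      x^2 * (Real.sqrt (4 * lam - (x - 1 - lam)^2) / (2 * Real.pi * lam * x)) = 1 + lam := by
  have hlam0 : 0 < lam := hlam.1
  set s := √lam
  have hs : 0 ≤ s := sqrt_nonneg lam
  have hs2 : s ^ 2 = lam := sq_sqrt hlam0.le
  have hdensity : ∀ x : ℝ, x ^ 2 * (√(4 * lam - (x - 1 - lam) ^ 2) / (2 * π * lam * x))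
      = x * √((2 * s) ^ 2 - (x - (1 + lam)) ^ 2) / (2 * π * lam) := fun x => by
    rcases eq_or_ne x 0 with rfl | hx
    · simp -- both sides are `0`, using `y / 0 = 0`
    · rw [show (2 * s) ^ 2 - (x - (1 + lam)) ^ 2 = 4 * lam - (x - 1 - lam) ^ 2 by
        rw [mul_pow, hs2]; ring]
      field_simp
  have hlower : (1 - s) ^ 2 = 1 + lam - 2 * s := by rw [← hs2]; ring
  have hupper : (1 + s) ^ 2 = 1 + lam + 2 * s := by rw [← hs2]; ring
  simp_rw [hdensity]
  rw [integral_Icc_eq_integral_Ioc, ← intervalIntegral.integral_of_le (by nlinarith),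
    intervalIntegral.integral_div, hlower, hupper,
    integral_mul_sqrt_sq_sub_sq_sub (1 + lam) (by positivity), mul_pow, hs2]
  field_simp
end

section
/- There is no probability measure τ on [0,∞) such that the function M_τ(z) = ∫ zt/(1−zt) dτ(t) satisfies, for all z in some neighborhood of 0 in ℂ∖[0,∞), M_τ(z) = (z − 1 + √((1−z)² + 4λz))/(2λ), where λ ∈ (0,1] is fixed and the square root denotes the principal branch. -/
/-! On the negative half-line, `z = -x`, the identity says `∫ t / (1 + x t) dτ = g(x)` with
`g(x) = 2 / (1 + x + √((1 + x)² - 4λx))`. Since `g ≤ 1`, Fatou's lemma gives `∫ t dτ ≤ 1`.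
On the other hand, with `h = t / (1 + x t)` one has `x h² ≤ t - h`, so integrating
`x (h - g)² ≥ 0` against the probability measure `τ` (a variance inequality) yields `g + x g² ≤ ∫ t dτ`, whereas `g + x g² > 1` as soon as
`0 < x < λ (1 + λ)`. -/

open MeasureTheory Complex Filter Topology Set

section AlgebraicTransform

variable {lam x : ℝ}

noncomputable def algebraicTransform (lam x : ℝ) : ℝ :=
  2 / (1 + x + √((1 + x) ^ 2 - 4 * lam * x))

lemma discr_nonneg (hlam : lam ≤ 1) (hx : 0 ≤ x) : 0 ≤ (1 + x) ^ 2 - 4 * lam * x := by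
  nlinarith [sq_nonneg (1 - x)]

lemma one_sub_le_sqrt_discr (hlam : lam ≤ 1) (hx : 0 ≤ x) :
    1 - x ≤ √((1 + x) ^ 2 - 4 * lam * x) :=
  Real.le_sqrt_of_sq_le (by nlinarith)

lemma algebraicTransform_le_one (hlam : lam ≤ 1) (hx : 0 ≤ x) : algebraicTransform lam x ≤ 1 := by
  have := one_sub_le_sqrt_discr hlam hx
  rw [algebraicTransform, div_le_one (by linarith)]
  linarith

lemma one_lt_algebraicTransform_add_mul_sq (hlam : lam ∈ Ioc 0 1) (hx : 0 < x)
    (hx' : x < lam * (1 + lam)) :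
    1 < algebraicTransform lam x + x * algebraicTransform lam x ^ 2 := by
  obtain ⟨hlam0, hlam1⟩ := hlam
  rw [algebraicTransform]
  set s := √((1 + x) ^ 2 - 4 * lam * x)
  have hs : s ^ 2 = (1 + x) ^ 2 - 4 * lam * x := Real.sq_sqrt (discr_nonneg hlam1 hx.le)
  have hsx : 1 - x ≤ s := one_sub_le_sqrt_discr hlam1 hx.le
  have hs_lt : s < 1 + 2 * lam - x := (Real.sqrt_lt' (by nlinarith)).2 (by nlinarith)
  have hD : 0 < 1 + x + s := by linarith
  rw [div_pow, mul_div_assoc', div_add_div _ _ hD.ne' (by positivity), one_lt_div (by positivity)]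
  have key : (1 + x + s) ^ 2 < 2 * (1 + x + s) + 4 * x := by
    nlinarith [mul_pos hx (sub_pos.2 hs_lt)]
  nlinarith [mul_lt_mul_of_pos_left key hD]

lemma integral_div_one_add_mul_eq_algebraicTransform {τ : Measure ℝ}
    (hlam : lam ∈ Ioc 0 1) (hx : 0 < x)
    (h : ∫ t : ℝ, -(x : ℂ) * t / (1 - -(x : ℂ) * t) ∂τ
      = (-(x : ℂ) - 1 + ((1 - -(x : ℂ)) ^ 2 + 4 * (lam : ℂ) * -(x : ℂ)) ^ ((1 : ℂ) / 2))
        / (2 * lam)) :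
    ∫ t, t / (1 + x * t) ∂τ = algebraicTransform lam x := by
  obtain ⟨hlam0, hlam1⟩ := hlam
  have hsqrt : ((1 - -(x : ℂ)) ^ 2 + 4 * (lam : ℂ) * -(x : ℂ)) ^ ((1 : ℂ) / 2)
      = ((√((1 + x) ^ 2 - 4 * lam * x) : ℝ) : ℂ) := by
    rw [Real.sqrt_eq_rpow, ofReal_cpow (discr_nonneg hlam1 hx.le)]
    push_cast
    ring_nf
  have hintegrand : ∀ t : ℝ,
      -(x : ℂ) * t / (1 - -(x : ℂ) * t) = ((-(x * (t / (1 + x * t))) : ℝ) : ℂ) := by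
    intro t
    push_cast
    ring
  rw [integral_congr_ae (ae_of_all _ hintegrand), integral_complex_ofReal, hsqrt] at h
  have hreal : -(x * ∫ t, t / (1 + x * t) ∂τ)
      = (-x - 1 + √((1 + x) ^ 2 - 4 * lam * x)) / (2 * lam) := by
    rw [← integral_const_mul, ← integral_neg]
    exact_mod_cast h
  set s := √((1 + x) ^ 2 - 4 * lam * x)
  have hs : s ^ 2 = (1 + x) ^ 2 - 4 * lam * x := Real.sq_sqrt (discr_nonneg hlam1 hx.le)
  have hD : 0 < 1 + x + s := by linarith [one_sub_le_sqrt_discr hlam1 hx.le]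
  rw [algebraicTransform, eq_div_iff hD.ne']
  apply mul_left_cancel₀ (mul_ne_zero hx.ne' hlam0.ne')
  field_simp at hreal
  linear_combination -(1 + x + s) / 2 * hreal - hs / 2

end AlgebraicTransform

section Moments

variable {τ : Measure ℝ} {x : ℝ}

lemma integrable_div_one_add_mul [IsFiniteMeasure τ] (hτ : ∀ᵐ t ∂τ, 0 ≤ t) (hx : 0 < x) :
    Integrable (fun t => t / (1 + x * t)) τ := by
  refine (integrable_const x⁻¹).mono'
    (by fun_prop : Measurable fun t : ℝ => t / (1 + x * t)).aestronglyMeasurable ?_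
  filter_upwards [hτ] with t ht
  have h1 : 0 < 1 + x * t := by positivity
  rw [Real.norm_eq_abs, abs_of_nonneg (by positivity), div_le_iff₀ h1]
  field_simp
  linarith

lemma lintegral_ofReal_le_of_integral_div_one_add_mul_le [IsFiniteMeasure τ]
    (hτ : ∀ᵐ t ∂τ, 0 ≤ t) {ε C : ℝ} (hε : 0 < ε)
    (h : ∀ x ∈ Ioo 0 ε, ∫ t, t / (1 + x * t) ∂τ ≤ C) :
    ∫⁻ t, ENNReal.ofReal t ∂τ ≤ ENNReal.ofReal C := by
  have hlim : ∀ t, Tendsto (fun x => ENNReal.ofReal (t / (1 + x * t))) (𝓝[>] 0)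
      (𝓝 (ENNReal.ofReal t)) := by
    intro t
    refine ENNReal.tendsto_ofReal (tendsto_nhdsWithin_of_tendsto_nhds ?_)
    have : ContinuousAt (fun x : ℝ => t / (1 + x * t)) 0 := by
      apply ContinuousAt.div <;> first | fun_prop | simp
    simpa using this.tendsto
  calc ∫⁻ t, ENNReal.ofReal t ∂τ
      = ∫⁻ t, liminf (fun x => ENNReal.ofReal (t / (1 + x * t))) (𝓝[>] 0) ∂τ := by
        simp only [fun t => (hlim t).liminf_eq]
    _ ≤ liminf (fun x => ∫⁻ t, ENNReal.ofReal (t / (1 + x * t)) ∂τ) (𝓝[>] 0) :=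
        lintegral_liminf_le' fun x => by fun_prop
    _ ≤ ENNReal.ofReal C := by
        refine liminf_le_of_frequently_le' (Eventually.frequently ?_)
        filter_upwards [Ioo_mem_nhdsGT hε] with x hx
        rw [← ofReal_integral_eq_lintegral_ofReal (integrable_div_one_add_mul hτ hx.1)]
        · exact ENNReal.ofReal_le_ofReal (h x hx)
        · filter_upwards [hτ] with t ht
          have : 0 < 1 + x * t := by nlinarith [hx.1]
          positivity

lemma integrable_id_and_integral_le_of_integral_div_one_add_mul_le [IsFiniteMeasure τ]
    (hτ : ∀ᵐ t ∂τ, 0 ≤ t) {ε C : ℝ} (hε : 0 < ε) (hC : 0 ≤ C)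
    (h : ∀ x ∈ Ioo 0 ε, ∫ t, t / (1 + x * t) ∂τ ≤ C) :
    Integrable (fun t => t) τ ∧ ∫ t, t ∂τ ≤ C := by
  have hlint := lintegral_ofReal_le_of_integral_div_one_add_mul_le hτ hε h
  refine ⟨⟨aestronglyMeasurable_id, (hasFiniteIntegral_iff_ofReal hτ).2
    (hlint.trans_lt ENNReal.ofReal_lt_top)⟩, ?_⟩
  rw [integral_eq_lintegral_of_nonneg_ae hτ aestronglyMeasurable_id]
  exact ENNReal.toReal_le_of_le_ofReal hC hlint

lemma div_one_add_mul_add_mul_le {t : ℝ} (ht : 0 ≤ t) (hx : 0 ≤ x) (c : ℝ) :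
    t / (1 + x * t) + x * (2 * c * (t / (1 + x * t)) - c ^ 2) ≤ t := by
  have h1 : 0 < 1 + x * t := by positivity
  have hh : t / (1 + x * t) ≤ t := div_le_self ht (by nlinarith)
  have hsub : t - t / (1 + x * t) = x * t * (t / (1 + x * t)) := by field_simp; ring
  nlinarith [mul_nonneg hx (sq_nonneg (t / (1 + x * t) - c)),
    mul_le_mul_of_nonneg_left hh (mul_nonneg hx (div_nonneg ht h1.le))]

lemma integral_div_one_add_mul_add_mul_sq_le [IsProbabilityMeasure τ] (hτ : ∀ᵐ t ∂τ, 0 ≤ t)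
    (hint : Integrable (fun t => t) τ) (hx : 0 < x) :
    (∫ t, t / (1 + x * t) ∂τ) + x * (∫ t, t / (1 + x * t) ∂τ) ^ 2 ≤ ∫ t, t ∂τ := by
  set g := ∫ t, t / (1 + x * t) ∂τ
  have hh := integrable_div_one_add_mul hτ hx
  calc g + x * g ^ 2 = ∫ t, t / (1 + x * t) + x * (2 * g * (t / (1 + x * t)) - g ^ 2) ∂τ := by
        have hlin : Integrable (fun t => 2 * g * (t / (1 + x * t)) - g ^ 2) τ :=
          (hh.const_mul _).sub (integrable_const _)
        rw [integral_add hh (hlin.const_mul x), integral_const_mul,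
          integral_sub (hh.const_mul _) (integrable_const _), integral_const_mul]
        simp only [integral_const, probReal_univ, smul_eq_mul, one_mul]
        ring
    _ ≤ ∫ t, t ∂τ := integral_mono_ae (by fun_prop) hint
        (by filter_upwards [hτ] with t ht using div_one_add_mul_add_mul_le ht hx.le g)

end Moments

theorem stmt_4 (lam : ℝ) (hlam : lam ∈ Set.Ioc (0:ℝ) 1) :
    ¬ ∃ (τ : Measure ℝ), IsProbabilityMeasure τ ∧ τ (Set.Iio 0) = 0 ∧
      ∃ ε > (0:ℝ), ∀ z : ℂ, z ∈ Metric.ball (0:ℂ) ε → ¬ (z.im = 0 ∧ 0 ≤ z.re) →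
        (∫ t : ℝ, (z * t) / (1 - z * t) ∂τ)
          = (z - 1 + ((1 - z)^2 + 4 * (lam:ℂ) * z) ^ ((1:ℂ)/2)) / (2 * lam) := by
  rintro ⟨τ, hτ, hsupp, ε, hε, hM⟩
  have hpos : ∀ᵐ t ∂τ, 0 ≤ t := by simpa [ae_iff, Set.Iio] using hsupp
  have htransform : ∀ x ∈ Ioo 0 ε, ∫ t, t / (1 + x * t) ∂τ = algebraicTransform lam x := by
    rintro x ⟨hx0, hxε⟩
    refine integral_div_one_add_mul_eq_algebraicTransform hlam hx0 (hM _ ?_ ?_)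
    · simpa [abs_of_pos hx0] using hxε
    · simp [hx0]
  obtain ⟨hint, hmean⟩ := integrable_id_and_integral_le_of_integral_div_one_add_mul_le hpos hε
    zero_le_one fun x hx => (htransform x hx).trans_le (algebraicTransform_le_one hlam.2 hx.1.le)
  obtain ⟨x, hx0, hx⟩ : ∃ x, 0 < x ∧ x < min ε (lam * (1 + lam)) :=
    exists_between (lt_min hε (by nlinarith [hlam.1]))
  have hvar := integral_div_one_add_mul_add_mul_sq_le hpos hint hx0
  rw [htransform x ⟨hx0, hx.trans_le (min_le_left _ _)⟩] at hvar
  linarith [one_lt_algebraicTransform_add_mul_sq hlam hx0 (hx.trans_le (min_le_right _ _))]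
end

section
/- Formal power series identity (core of the Debbah–Ryan proof): let λ ∈ ℝ, T(z) = (λz+1)(z+1), and let m ∈ ℝ[[z]] with m(0)=0 and m'(0) ≠ 0, with compositional inverse m^{⟨−1⟩}. Define H(z) = z·T(m(z)), g(z) = H(z)/T(H(z)+m(z)) (a power series with g(0)=0 and g'(0)=1), and M(z) = the power series whose compositional inverse is (1/(1+λz))·(z/(1+z))∘[(z+1)·((1+λz)m^{⟨−1⟩}(z))^{⟨−1⟩}+z]^{⟨−1⟩}. Then M ∘ g = H + m. -/
open PowerSeries

/-- Composition `f ∘ g` of formal power series (valid when `g` has zero constant term). -/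
noncomputable def psComp (f g : PowerSeries ℝ) : PowerSeries ℝ :=
  PowerSeries.mk fun n => PowerSeries.coeff n (Polynomial.aeval g (PowerSeries.trunc (n+1) f))

/-- `T(s) = (λ s + 1)(s + 1)` applied to a power series `s`. -/
noncomputable def Tser (lam : ℝ) (s : PowerSeries ℝ) : PowerSeries ℝ :=
  (PowerSeries.C lam * s + 1) * (s + 1)

/-!
Write `f ∘ g` for `f.subst g`, which agrees with `psComp f g` when `g(0) = 0`; Mathlib's
substitution is an algebra map and associative, so a left inverse cancels.
With `w = H + m` and `s = z (1 + λ m)` one has `H = s (1 + m)`, hence `w = (1 + s) m + s` and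
`w + 1 = (1 + s)(1 + m)`. Unwinding the definitions gives `p ∘ m = s`, so `q ∘ s = m`, so
`r ∘ s = w` and `rinv ∘ w = s`. Then `(1 + λ w)(1 + s)(Minv ∘ w) = (1 + s)(u ∘ s) = s`, while
`g T(w) = H` says `(1 + λ w)(1 + s) g = s` after cancelling the unit `1 + m`. Hence
`Minv ∘ w = g` and `M ∘ g = w`.
-/

theorem psComp_eq_subst (f : ℝ⟦X⟧) {g : ℝ⟦X⟧} (hg : constantCoeff g = 0) :
    psComp f g = f.subst g := by
  have hsubst := HasSubst.of_constantCoeff_zero' hg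
  ext n
  -- `f` and its truncation agree below degree `n + 1`, and substituting `g` cannot lower the order.
  have htail : (n : ℕ∞) < ((trunc (n + 1) f : ℝ⟦X⟧) - f).order :=
    (ENat.natCast_lt_natCast.mpr n.lt_succ_self).trans_le <| le_order _ _ fun i hi ↦ by
      rw [map_sub, coeff_coe_trunc_of_lt (by exact_mod_cast hi), sub_self]
  rw [psComp, coeff_mk, ← subst_coe hsubst, ← sub_eq_zero, ← map_sub, ← subst_sub hsubst]
  exact coeff_of_lt_order _ (htail.trans_le (le_order_subst_left' hg))

section CommRing

variable {R : Type*} [CommRing R]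

theorem subst_C_eq_C (a : R⟦X⟧) (r : R) : (C r).subst a = C r :=
  subst_C r

theorem subst_one_eq_one (a : R⟦X⟧) : (1 : R⟦X⟧).subst a = 1 := by
  simpa using subst_C_eq_C a 1

theorem isUnit_one_add {f : R⟦X⟧} (hf : constantCoeff f = 0) : IsUnit (1 + f) := by
  simp [isUnit_iff_constantCoeff, hf]

theorem subst_eq_of_subst_eq_X {f g v w : R⟦X⟧} (hg : constantCoeff g = 0)
    (hv : constantCoeff v = 0) (hfg : f.subst g = X) (hgv : g.subst v = w) :
    f.subst w = v := by
  rw [← hgv, ← subst_comp_subst_apply (HasSubst.of_constantCoeff_zero' hg)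
    (HasSubst.of_constantCoeff_zero' hv), hfg, subst_X (HasSubst.of_constantCoeff_zero' hv)]

theorem subst_add_eq_X_mul_one_add_C_mul (lam : R) {m minv H p q r rinv : R⟦X⟧}
    (hm0 : constantCoeff m = 0) (hinv : minv.subst m = X)
    (hH : H = X * ((C lam * m + 1) * (m + 1)))
    (hp : p = (1 + C lam * X) * minv) (hp0 : constantCoeff p = 0) (hq : q.subst p = X)
    (hr : r = (X + 1) * q + X) (hr0 : constantCoeff r = 0) (hrinv : rinv.subst r = X) :
    rinv.subst (H + m) = X * (1 + C lam * m) := by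
  have hmS := HasSubst.of_constantCoeff_zero' hm0
  have hs0 : constantCoeff (X * (1 + C lam * m)) = 0 := by simp
  have hsS := HasSubst.of_constantCoeff_zero' hs0
  have hpm : p.subst m = X * (1 + C lam * m) := by
    rw [hp, subst_mul hmS, hinv, subst_add hmS, subst_mul hmS, subst_X hmS, subst_C_eq_C,
      subst_one_eq_one]
    ring
  have hqs : q.subst (X * (1 + C lam * m)) = m := subst_eq_of_subst_eq_X hp0 hm0 hq hpm
  refine subst_eq_of_subst_eq_X hr0 hs0 hrinv ?_
  rw [hr, subst_add hsS, subst_mul hsS, subst_add hsS, subst_X hsS, subst_one_eq_one, hqs, hH]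
  ring

theorem subst_add_eq_of_mul_eq (lam : R) {m H g rinv u Minv : R⟦X⟧}
    (hm0 : constantCoeff m = 0) (hH : H = X * ((C lam * m + 1) * (m + 1)))
    (hg : g * ((C lam * (H + m) + 1) * (H + m + 1)) = H)
    (hrinv0 : constantCoeff rinv = 0) (hrinv : rinv.subst (H + m) = X * (1 + C lam * m))
    (hu : u * (1 + X) = X) (hMinv : (1 + C lam * X) * Minv = u.subst rinv) :
    Minv.subst (H + m) = g := by
  set w := H + m with hw
  set s : R⟦X⟧ := X * (1 + C lam * m) with hs
  have hw0 : constantCoeff w = 0 := by simp [hw, hH, hm0]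
  have hwS := HasSubst.of_constantCoeff_zero' hw0
  have hsS := HasSubst.of_constantCoeff_zero' (by simp [hs] : constantCoeff s = 0)
  have hus : u.subst s * (1 + s) = s := by
    simpa only [subst_mul hsS, subst_add hsS, subst_X hsS, subst_one_eq_one]
      using congrArg (subst s) hu
  have hMinvw : (1 + C lam * w) * Minv.subst w = u.subst s := by
    simpa only [subst_mul hwS, subst_add hwS, subst_X hwS, subst_one_eq_one, subst_C_eq_C,
      subst_comp_subst_apply (HasSubst.of_constantCoeff_zero' hrinv0) hwS, hrinv]
      using congrArg (subst w) hMinv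
  have hMinvw' : (1 + C lam * w) * (1 + s) * Minv.subst w = s :=
    calc (1 + C lam * w) * (1 + s) * Minv.subst w
        = u.subst s * (1 + s) := by rw [← hMinvw]; ring
      _ = s := hus
  have hg' : (1 + C lam * w) * (1 + s) * g = s := by
    refine (isUnit_one_add hm0).mul_left_cancel ?_
    calc (1 + m) * ((1 + C lam * w) * (1 + s) * g)
        = g * ((C lam * w + 1) * (w + 1)) := by rw [hw, hH]; ring
      _ = (1 + m) * s := by rw [hg, hH]; ring
  have hunit : IsUnit ((1 + C lam * w) * (1 + s)) :=
    (isUnit_one_add (by simp [hw0])).mul (isUnit_one_add (by simp [hs]))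
  exact hunit.mul_left_cancel (hMinvw'.trans hg'.symm)

end CommRing

theorem stmt_14_general (lam : ℝ) (m minv H g p q r rinv u Minv M : PowerSeries ℝ)
    -- m and its compositional inverse
    (hm0 : PowerSeries.constantCoeff m = 0)
    (hminv0 : PowerSeries.constantCoeff minv = 0)
    (hinv2 : psComp minv m = PowerSeries.X)
    -- H = z T(m)
    (hH : H = PowerSeries.X * Tser lam m)
    -- g = H / T(H + m), with g(0) = 0 and g'(0) = 1
    (hg : g * Tser lam (H + m) = H)
    (hg0 : PowerSeries.constantCoeff g = 0)
    -- p = (1 + λ z) m⁻¹ and q its compositional inverse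
    (hp : p = (1 + PowerSeries.C lam * PowerSeries.X) * minv)
    (hq0 : PowerSeries.constantCoeff q = 0)
    (hq2 : psComp q p = PowerSeries.X)
    -- r = (z+1) q + z and rinv its compositional inverse
    (hr : r = (PowerSeries.X + 1) * q + PowerSeries.X)
    (hrinv0 : PowerSeries.constantCoeff rinv = 0)
    (hr2 : psComp rinv r = PowerSeries.X)
    -- u = z/(1+z)
    (hu0 : PowerSeries.constantCoeff u = 0) (hu : u * (1 + PowerSeries.X) = PowerSeries.X)
    -- Minv = (1/(1+λz)) ⬝ (z/(1+z)) ∘ rinv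
    (hMinv : (1 + PowerSeries.C lam * PowerSeries.X) * Minv = psComp u rinv)
    -- M is the series with compositional inverse Minv
    (hM1 : psComp M Minv = PowerSeries.X) :
    psComp M g = H + m := by
  have hp0 : constantCoeff p = 0 := by simp [hp, hminv0]
  have hr0 : constantCoeff r = 0 := by simp [hr, hq0]
  rw [psComp_eq_subst _ hrinv0] at hMinv
  have hMinv0 : constantCoeff Minv = 0 := by
    simpa using (congrArg constantCoeff hMinv).trans (constantCoeff_subst_eq_zero hrinv0 u hu0)
  rw [psComp_eq_subst _ hm0] at hinv2
  rw [psComp_eq_subst _ hp0] at hq2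
  rw [psComp_eq_subst _ hr0] at hr2
  rw [psComp_eq_subst _ hMinv0] at hM1
  rw [psComp_eq_subst _ hg0]
  have hrinv := subst_add_eq_X_mul_one_add_C_mul lam hm0 hinv2 hH hp hp0 hq2 hr hr0 hr2
  exact subst_eq_of_subst_eq_X hMinv0 (by simp [hH, hm0]) hM1
    (subst_add_eq_of_mul_eq lam hm0 hH hg hrinv0 hrinv hu hMinv)

/-- Core formal power series identity of the Debbah–Ryan proof:
with `H = z T(m)`, `g = H / T(H+m)`, and `M` the series whose compositional inverse is
`(1/(1+λz)) ⬝ (z/(1+z)) ∘ [(z+1)((1+λz) m⁻¹)⁻¹ + z]⁻¹`, one has `M ∘ g = H + m`. -/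
theorem stmt_14 (lam : ℝ) (m minv H g p q r rinv u Minv M : PowerSeries ℝ)
    -- m and its compositional inverse
    (hm0 : PowerSeries.constantCoeff m = 0) (hm1 : PowerSeries.coeff 1 m ≠ 0)
    (hminv0 : PowerSeries.constantCoeff minv = 0)
    (hinv1 : psComp m minv = PowerSeries.X) (hinv2 : psComp minv m = PowerSeries.X)
    -- H = z T(m)
    (hH : H = PowerSeries.X * Tser lam m)
    -- g = H / T(H + m), with g(0) = 0 and g'(0) = 1
    (hg : g * Tser lam (H + m) = H)
    (hg0 : PowerSeries.constantCoeff g = 0) (hg1 : PowerSeries.coeff 1 g = 1)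
    -- p = (1 + λ z) m⁻¹ and q its compositional inverse
    (hp : p = (1 + PowerSeries.C lam * PowerSeries.X) * minv)
    (hq0 : PowerSeries.constantCoeff q = 0)
    (hq1 : psComp p q = PowerSeries.X) (hq2 : psComp q p = PowerSeries.X)
    -- r = (z+1) q + z and rinv its compositional inverse
    (hr : r = (PowerSeries.X + 1) * q + PowerSeries.X)
    (hrinv0 : PowerSeries.constantCoeff rinv = 0)
    (hr1 : psComp r rinv = PowerSeries.X) (hr2 : psComp rinv r = PowerSeries.X)
    -- u = z/(1+z)
    (hu0 : PowerSeries.constantCoeff u = 0) (hu : u * (1 + PowerSeries.X) = PowerSeries.X)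
    -- Minv = (1/(1+λz)) ⬝ (z/(1+z)) ∘ rinv
    (hMinv : (1 + PowerSeries.C lam * PowerSeries.X) * Minv = psComp u rinv)
    -- M is the series with compositional inverse Minv
    (hM0 : PowerSeries.constantCoeff M = 0)
    (hM1 : psComp M Minv = PowerSeries.X) (hM2 : psComp Minv M = PowerSeries.X) :
    psComp M g = H + m :=
  stmt_14_general lam m minv H g p q r rinv u Minv M hm0 hminv0 hinv2 hH hg hg0 hp hq0 hq2 hr hrinv0
    hr2 hu0 hu hMinv hM1
end
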